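/- Let n ≥ 1, let ŷ : Fin n → ℝ be the clean classifier's logits on a backdoored input, assumed to have a unique strict maximizer î (ŷ k < ŷ î for all k ≠ î), and let l_adv : Fin n be the adversary's target class with l_adv ≠ î. Define the backdoored output logits as output = ŷ ∘ Equiv.swap î l_adv (the result of Modify). Then the class predicted by the backdoored model, i.e. the unique maximizer of output, equals l_adv, and hence differs from the class î predicted by the clean model. -/
import Mathlib

/-- Effectiveness of the backdoor's `Modify` procedure. If the clean
logits `yhat` have unique strict maximizer `ihat` and the adversary's target class
`l_adv ≠ ihat`, then the modified logits `output = yhat ∘ Equiv.swap ihat l_adv` have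
`l_adv` as their unique strict maximizer; hence the backdoored model's prediction is
`l_adv`, which differs from the clean model's prediction `ihat`. -/
theorem modify_outputs_target_class
    {n : ℕ} (hn : 1 ≤ n) (yhat : Fin n → ℝ) (ihat : Fin n)
    (hmax : ∀ k : Fin n, k ≠ ihat → yhat k < yhat ihat)
    (l_adv : Fin n) (hl : l_adv ≠ ihat)
    (output : Fin n → ℝ) (hout : output = yhat ∘ Equiv.swap ihat l_adv) :
    (∀ k : Fin n, k ≠ l_adv → output k < output l_adv) ∧ l_adv ≠ ihat := by
  subst hout
  refine ⟨fun k hk => ?_, hl⟩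
  simp only [Function.comp, Equiv.swap_apply_right]
  rcases eq_or_ne k ihat with rfl | hki
  · rw [Equiv.swap_apply_left]
    exact hmax l_adv hl
  · rw [Equiv.swap_apply_of_ne_of_ne hki hk]
    exact hmax k hki
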